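/- Fix n ≥ 3 and let eval map a word w : List (Fin n × Bool) to the ordered product in Equiv.Perm (Option (Fin n × ℕ)) of the shifts s_i (for letters (i, true)) and their inverses s_i⁻¹ (for letters (i, false)). Then the language L = {w : List (Fin n × Bool) | (eval w) none ≠ none} of all words moving the center of the star is a context-free language. -/

import Mathlib

/-- Modular successor on `Fin n`. -/
def fsucc {n : ℕ} (i : Fin n) : Fin n :=
  ⟨(i.val + 1) % n, Nat.mod_lt _ (Nat.lt_of_le_of_lt (Nat.zero_le _) i.isLt)⟩

lemma fsucc_ne {n : ℕ} (hn : 2 ≤ n) (i : Fin n) : fsucc i ≠ i := by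
  rcases Nat.lt_or_ge (i.val + 1) n with h | h
  · intro he
    have : (i.val + 1) % n = i.val := congrArg Fin.val he
    rw [Nat.mod_eq_of_lt h] at this
    omega
  · intro he
    have hi := i.isLt
    have hn1 : i.val + 1 = n := by omega
    have : (i.val + 1) % n = i.val := congrArg Fin.val he
    rw [hn1, Nat.mod_self] at this
    omega

/-- The underlying function of the shift `s_i` on the star `*^n` with center `none`. -/
def shiftFun {n : ℕ} (i : Fin n) : Option (Fin n × ℕ) → Option (Fin n × ℕ)
  | none => some (fsucc i, 0)
  | some (l, k) =>
      if l = i then (match k with | 0 => none | Nat.succ k' => some (i, k'))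
      else if l = fsucc i then some (fsucc i, k + 1)
      else some (l, k)

/-- The inverse of `shiftFun i`. -/
def shiftInvFun {n : ℕ} (i : Fin n) : Option (Fin n × ℕ) → Option (Fin n × ℕ)
  | none => some (i, 0)
  | some (l, k) =>
      if l = i then some (i, k + 1)
      else if l = fsucc i then (match k with | 0 => none | Nat.succ k' => some (fsucc i, k'))
      else some (l, k)

/-- The shift `s_i`, as a permutation of the star `*^n`. -/
def shift {n : ℕ} (hn : 2 ≤ n) (i : Fin n) : Equiv.Perm (Option (Fin n × ℕ)) where
  toFun := shiftFun i
  invFun := shiftInvFun i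
  left_inv := by
    have hs := fsucc_ne hn i
    rintro (_ | ⟨l, k⟩)
    · simp [shiftFun, shiftInvFun, hs]
    · by_cases hl : l = i
      · subst hl
        cases k with
        | zero => simp [shiftFun, shiftInvFun]
        | succ k' => simp [shiftFun, shiftInvFun]
      · by_cases hl2 : l = fsucc i
        · subst hl2; simp [shiftFun, shiftInvFun, hs]
        · simp [shiftFun, shiftInvFun, hl, hl2]
  right_inv := by
    have hs := fsucc_ne hn i
    rintro (_ | ⟨l, k⟩)
    · simp [shiftFun, shiftInvFun, hs]
    · by_cases hl : l = i
      · subst hl; simp [shiftFun, shiftInvFun]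
      · by_cases hl2 : l = fsucc i
        · subst hl2
          cases k with
          | zero => simp [shiftFun, shiftInvFun, hs]
          | succ k' => simp [shiftFun, shiftInvFun, hs]
        · simp [shiftFun, shiftInvFun, hl, hl2]

/-- Evaluation of a signed word over the alphabet `A` in the group `G`. -/
def evalWord {G A : Type*} [Group G] (f : A → G) (w : List (A × Bool)) : G :=
  (w.map fun p => if p.2 then f p.1 else (f p.1)⁻¹).prod


/-!
Follow the centre as the letters act on it, i.e. from the right end of the word. A letter pushes
the centre onto one ray, moves the points of that ray one step outward and those of one other ray
one step inward, and fixes the remaining rays. So while the point stays on a ray, its distance to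
the centre is a walk with steps `+1, -1, 0`, and the point is back at the centre exactly when this
walk first goes negative. Splitting the reversed word at the last visit to the centre, the centre
is moved iff the word is `z a v`, where `z` brings the centre back to itself and `v` is a walk on
the ray entered by `a` that never goes negative; `z` in turn is a concatenation of blocks `a v d`,
with `v` a Dyck walk on the ray entered by `a` and `d` a step inward on it. These descriptions
form a context-free grammar, and context-free languages are closed under reversal.
-/

namespace SignedWalk

variable {T : Type*} (step : T → SignType)

def height (w : List T) : ℤ := (w.map fun x => (step x : ℤ)).sum

def StaysNonneg : ℤ → List T → Prop
  | k, [] => 0 ≤ k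
  | k, x :: w => 0 ≤ k ∧ StaysNonneg (k + step x) w

def IsDyck (w : List T) : Prop := StaysNonneg step 0 w ∧ height step w = 0

variable {step}

@[simp] lemma height_nil : height step [] = 0 := rfl

@[simp] lemma height_cons (x : T) (w : List T) :
    height step (x :: w) = step x + height step w := by
  simp [height]

@[simp] lemma height_append (u v : List T) :
    height step (u ++ v) = height step u + height step v := by
  simp [height]

@[simp] lemma staysNonneg_nil {k : ℤ} : StaysNonneg step k [] ↔ 0 ≤ k := Iff.rfl

@[simp] lemma staysNonneg_cons {k : ℤ} {x : T} {w : List T} :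
    StaysNonneg step k (x :: w) ↔ 0 ≤ k ∧ StaysNonneg step (k + step x) w := Iff.rfl

lemma StaysNonneg.nonneg {k : ℤ} {w : List T} (h : StaysNonneg step k w) : 0 ≤ k := by
  cases w <;> simp_all

lemma StaysNonneg.add_height_nonneg {k : ℤ} {w : List T} (h : StaysNonneg step k w) :
    0 ≤ k + height step w := by
  induction w generalizing k with
  | nil => simpa using h
  | cons x w ih => simpa [add_assoc] using ih h.2

lemma StaysNonneg.mono {k k' : ℤ} {w : List T} (h : StaysNonneg step k w) (hk : k ≤ k') :
    StaysNonneg step k' w := by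
  induction w generalizing k k' with
  | nil => exact h.trans hk
  | cons x w ih => exact ⟨h.1.trans hk, ih h.2 (by omega)⟩

lemma staysNonneg_append {k : ℤ} {u v : List T} :
    StaysNonneg step k (u ++ v) ↔
      StaysNonneg step k u ∧ StaysNonneg step (k + height step u) v := by
  induction u generalizing k with
  | nil => simpa using fun h => h.nonneg
  | cons x u ih => simp [ih, add_assoc, and_assoc]

lemma exists_first_passage {k : ℤ} {w : List T} (hk : 0 ≤ k) (hw : ¬StaysNonneg step k w) :
    ∃ w₁ d w₂, w = w₁ ++ d :: w₂ ∧ StaysNonneg step k w₁ ∧ k + height step w₁ = 0 ∧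
      step d = -1 := by
  induction w generalizing k with
  | nil => exact absurd hk hw
  | cons x w ih =>
    rw [staysNonneg_cons, not_and] at hw
    by_cases hx : 0 ≤ k + step x
    · obtain ⟨w₁, d, w₂, rfl, h₁, hh, hd⟩ := ih hx (hw hk)
      exact ⟨x :: w₁, d, w₂, rfl, ⟨hk, h₁⟩, by simpa [add_assoc] using hh, hd⟩
    · rcases (step x).trichotomy with hs | hs | hs <;> simp only [hs] at hx
      · exact ⟨[], x, w, rfl, hk, by simp at hx ⊢; omega, hs⟩
      all_goals simp at hx; omega

lemma StaysNonneg.cons {k : ℤ} {x : T} {w : List T} (hx : 0 ≤ step x)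
    (h : StaysNonneg step k w) : StaysNonneg step k (x :: w) := by
  refine ⟨h.nonneg, h.mono ?_⟩
  rcases SignType.nonneg_iff.mp hx with hx | hx <;> simp [hx]

lemma StaysNonneg.up_down {k : ℤ} {u d : T} {w₁ w₂ : List T} (hu : step u = 1)
    (hd : step d = -1) (h₁ : IsDyck step w₁) (h₂ : StaysNonneg step k w₂) :
    StaysNonneg step k (u :: (w₁ ++ d :: w₂)) := by
  have hk := h₂.nonneg
  simp only [staysNonneg_cons, staysNonneg_append, hu, hd, h₁.2, SignType.coe_one,
    SignType.coe_neg_one]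
  exact ⟨hk, h₁.1.mono (by omega), by omega, by simpa using h₂⟩

lemma isDyck_nil : IsDyck step [] := ⟨le_rfl, rfl⟩

lemma IsDyck.cons {x : T} {w : List T} (hx : step x = 0) (h : IsDyck step w) :
    IsDyck step (x :: w) := by
  simpa [IsDyck, hx] using h

lemma IsDyck.up_down {u d : T} {w₁ w₂ : List T} (hu : step u = 1) (hd : step d = -1)
    (h₁ : IsDyck step w₁) (h₂ : IsDyck step w₂) : IsDyck step (u :: (w₁ ++ d :: w₂)) :=
  ⟨.up_down hu hd h₁ h₂.1, by simp [hu, hd, h₁.2, h₂.2]⟩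

end SignedWalk

lemma Language.mem_singleton_iff {T : Type*} {v w : List T} :
    v ∈ ({w} : Language T) ↔ v = w := Iff.rfl

namespace ContextFreeGrammar

open SignedWalk Symbol

variable {T N : Type*}

def formLanguage (s : N → Language T) (u : List (Symbol T N)) : Language T :=
  (u.map fun | terminal a => {[a]} | nonterminal X => s X).prod

section formLanguage

variable {s : N → Language T} {w : List T}

@[simp] lemma mem_formLanguage_nil : w ∈ formLanguage s [] ↔ w = [] := Language.mem_one w

@[simp] lemma mem_formLanguage_terminal_cons {a : T} {u : List (Symbol T N)} :
    w ∈ formLanguage s (terminal a :: u) ↔ ∃ v ∈ formLanguage s u, w = a :: v := by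
  simp [formLanguage, Language.mem_mul, Language.mem_singleton_iff, eq_comm]

@[simp] lemma mem_formLanguage_nonterminal_cons {X : N} {u : List (Symbol T N)} :
    w ∈ formLanguage s (nonterminal X :: u) ↔
      ∃ x ∈ s X, ∃ v ∈ formLanguage s u, w = x ++ v := by
  simp [formLanguage, Language.mem_mul, eq_comm]

lemma formLanguage_append (u v : List (Symbol T N)) :
    formLanguage s (u ++ v) = formLanguage s u * formLanguage s v := by
  simp [formLanguage]

lemma formLanguage_map_terminal (w : List T) : formLanguage s (w.map terminal) = {w} := by
  ext v
  induction w generalizing v with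
  | nil => simp [Language.mem_singleton_iff]
  | cons a w ih => simp [ih, Language.mem_singleton_iff]

end formLanguage

variable {g : ContextFreeGrammar T}

theorem language_le_of_rules (s : g.NT → Language T)
    (hs : ∀ r ∈ g.rules, formLanguage s r.output ≤ s r.input) : g.language ≤ s g.initial := by
  have hmono : ∀ {u v}, g.Derives u v → formLanguage s v ≤ formLanguage s u := by
    intro u v huv
    induction huv with
    | refl => exact le_rfl
    | tail _ hp ih =>
      obtain ⟨r, hr, hrw⟩ := hp
      obtain ⟨p, q, rfl, rfl⟩ := hrw.exists_parts
      refine le_trans ?_ ih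
      simp only [formLanguage_append]
      gcongr
      simpa [formLanguage] using hs r hr
  intro w hw
  have h := hmono hw
  rw [formLanguage_map_terminal] at h
  simpa [formLanguage] using h (Language.mem_singleton_iff.mpr rfl)

lemma Derives.append {u u' v v' : List (Symbol T g.NT)} (hu : g.Derives u u')
    (hv : g.Derives v v') : g.Derives (u ++ v) (u' ++ v') :=
  (hu.append_right v).trans (hv.append_left u')

lemma derives_of_mem_rules {X : g.NT} {u v : List (Symbol T g.NT)} (hr : ⟨X, u⟩ ∈ g.rules)
    (h : g.Derives u v) : g.Derives [nonterminal X] v :=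
  (Produces.single ⟨_, hr, ContextFreeRule.Rewrites.input_output⟩).trans h

variable {step : T → SignType}

theorem derives_of_isDyck {X : g.NT} (hnil : ⟨X, []⟩ ∈ g.rules)
    (hflat : ∀ x, step x = 0 → ⟨X, [terminal x, nonterminal X]⟩ ∈ g.rules)
    (hupDown : ∀ u d, step u = 1 → step d = -1 →
      ⟨X, [terminal u, nonterminal X, terminal d, nonterminal X]⟩ ∈ g.rules) :
    ∀ {w : List T}, IsDyck step w → g.Derives [nonterminal X] (w.map terminal)
  | [], _ => derives_of_mem_rules hnil (.refl _)
  | x :: w, ⟨⟨_, hx⟩, hh⟩ => by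
    rw [height_cons] at hh
    rcases (step x).trichotomy with hs | hs | hs
    · simp only [hs] at hx
      exact absurd hx.nonneg (by norm_num)
    · refine derives_of_mem_rules (hflat x hs) ?_
      simp only [hs, SignType.coe_zero, zero_add] at hx hh
      simpa using (derives_of_isDyck hnil hflat hupDown ⟨hx, hh⟩).append_left [terminal x]
    · have hneg : ¬StaysNonneg step 0 w := fun h => by
        have := h.add_height_nonneg
        simp only [hs, SignType.coe_one] at hh
        omega
      -- split `x :: w` at its first return to level `0`
      obtain ⟨w₁, d, w₂, rfl, h₁, hh₁, hd⟩ := exists_first_passage le_rfl hneg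
      rw [zero_add] at hh₁
      simp only [hs, hd, SignType.coe_one, SignType.coe_neg_one, staysNonneg_append,
        staysNonneg_cons, hh₁, height_append, height_cons] at hx hh
      refine derives_of_mem_rules (hupDown x d hs hd) ?_
      have D₁ := derives_of_isDyck hnil hflat hupDown ⟨h₁, hh₁⟩
      have D₂ := derives_of_isDyck hnil hflat hupDown ⟨by simpa using hx.2.2, by linarith⟩
      simpa using ((Derives.refl [terminal x]).append D₁).append
        ((Derives.refl [terminal d]).append D₂)
termination_by w => w.length

theorem derives_of_staysNonneg {X Y : g.NT}
    (hX : ∀ {w : List T}, IsDyck step w → g.Derives [nonterminal X] (w.map terminal))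
    (hnil : ⟨Y, []⟩ ∈ g.rules)
    (hcons : ∀ x, 0 ≤ step x → ⟨Y, [terminal x, nonterminal Y]⟩ ∈ g.rules)
    (hupDown : ∀ u d, step u = 1 → step d = -1 →
      ⟨Y, [terminal u, nonterminal X, terminal d, nonterminal Y]⟩ ∈ g.rules) :
    ∀ {w : List T}, StaysNonneg step 0 w → g.Derives [nonterminal Y] (w.map terminal)
  | [], _ => derives_of_mem_rules hnil (.refl _)
  | x :: w, ⟨_, hx⟩ => by
    rw [zero_add] at hx
    have hs : 0 ≤ step x := SignType.nonneg_iff_ne_neg_one.mpr fun hs => by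
      simp only [hs, SignType.coe_neg_one] at hx
      exact absurd hx.nonneg (by norm_num)
    by_cases hw : StaysNonneg step 0 w
    · refine derives_of_mem_rules (hcons x hs) ?_
      simpa using (derives_of_staysNonneg hX hnil hcons hupDown hw).append_left [terminal x]
    · replace hs : step x = 1 := (SignType.nonneg_iff.mp hs).resolve_left fun hs => by
        simp only [hs, SignType.coe_zero] at hx
        exact hw hx
      obtain ⟨w₁, d, w₂, rfl, h₁, hh₁, hd⟩ := exists_first_passage le_rfl hw
      rw [zero_add] at hh₁
      simp only [hs, hd, SignType.coe_one, SignType.coe_neg_one, staysNonneg_append,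
        staysNonneg_cons, hh₁] at hx
      refine derives_of_mem_rules (hupDown x d hs hd) ?_
      have D₂ := derives_of_staysNonneg hX hnil hcons hupDown (w := w₂) (by simpa using hx.2.2)
      simpa using ((Derives.refl [terminal x]).append (hX ⟨h₁, hh₁⟩)).append
        ((Derives.refl [terminal d]).append D₂)
termination_by w => w.length

end ContextFreeGrammar

namespace StarShift

open SignedWalk ContextFreeGrammar Symbol

variable {n : ℕ}

/-- The letter `a` pushes the centre onto `upRay a` and moves the points of `upRay a` outward,
those of `downRay a` inward (`s_i`: rays `i + 1` and `i`; `s_i⁻¹`: the other way round). -/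
def upRay (a : Fin n × Bool) : Fin n := if a.2 then fsucc a.1 else a.1

def downRay (a : Fin n × Bool) : Fin n := if a.2 then a.1 else fsucc a.1

def rayStep (l : Fin n) (a : Fin n × Bool) : SignType :=
  if upRay a = l then 1 else if downRay a = l then -1 else 0

variable (hn : 2 ≤ n)

def letterPerm (a : Fin n × Bool) : Equiv.Perm (Option (Fin n × ℕ)) :=
  if a.2 then shift hn a.1 else (shift hn a.1)⁻¹

/-- The action of the letters of `w` from left to right: `w.reverse` as a word in `evalWord`. -/
def run (s : Option (Fin n × ℕ)) (w : List (Fin n × Bool)) : Option (Fin n × ℕ) :=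
  (w.reverse.map (letterPerm hn)).prod s

variable {hn}

@[simp] lemma letterPerm_none (a : Fin n × Bool) : letterPerm hn a none = some (upRay a, 0) := by
  rcases a with ⟨i, _ | _⟩ <;> rfl

lemma letterPerm_some (a : Fin n × Bool) (l : Fin n) (k : ℕ) :
    letterPerm hn a (some (l, k)) =
      if 0 ≤ (k : ℤ) + rayStep l a then some (l, ((k : ℤ) + rayStep l a).toNat) else none := by
  rcases a with ⟨i, b⟩
  have hs := fsucc_ne hn i
  rcases (by tauto : l = i ∨ l = fsucc i ∨ (i ≠ l ∧ fsucc i ≠ l)) with rfl | rfl | ⟨h₁, h₂⟩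
  · rcases k with _ | k <;> cases b <;>
      simp [letterPerm, rayStep, upRay, downRay, shift, shiftFun, shiftInvFun, hs]
    omega
  · rcases k with _ | k <;> cases b <;>
      simp [letterPerm, rayStep, upRay, downRay, shift, shiftFun, shiftInvFun, hs, Ne.symm hs]
    omega
  · cases b <;> simp [letterPerm, rayStep, upRay, downRay, shift, shiftFun, shiftInvFun, h₁, h₂,
      Ne.symm h₁, Ne.symm h₂]

lemma letterPerm_some_eq_none_iff {a : Fin n × Bool} {l : Fin n} {k : ℕ} :
    letterPerm hn a (some (l, k)) = none ↔ (k : ℤ) + rayStep l a < 0 := by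
  rw [letterPerm_some]
  split_ifs with h <;> simpa using h

@[simp] lemma run_nil (s : Option (Fin n × ℕ)) : run hn s [] = s := rfl

@[simp] lemma run_cons (s : Option (Fin n × ℕ)) (a : Fin n × Bool) (w : List (Fin n × Bool)) :
    run hn s (a :: w) = run hn (letterPerm hn a s) w := by
  simp [run, Equiv.Perm.mul_apply]

lemma run_append (s : Option (Fin n × ℕ)) (u v : List (Fin n × Bool)) :
    run hn s (u ++ v) = run hn (run hn s u) v := by
  simp [run, Equiv.Perm.mul_apply]

lemma run_of_staysNonneg {l : Fin n} {k : ℕ} {w : List (Fin n × Bool)}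
    (h : StaysNonneg (rayStep l) k w) :
    run hn (some (l, k)) w = some (l, ((k : ℤ) + height (rayStep l) w).toNat) := by
  induction w generalizing k with
  | nil => simp
  | cons x w ih =>
    obtain ⟨-, hx⟩ := h
    have h₀ := hx.nonneg
    rw [run_cons, letterPerm_some, if_pos h₀, ih (by rwa [Int.toNat_of_nonneg h₀])]
    simp [Int.toNat_of_nonneg h₀, add_assoc]

lemma run_append_cons {z v : List (Fin n × Bool)} {a : Fin n × Bool}
    (hz : run hn none z = none) (hv : StaysNonneg (rayStep (upRay a)) 0 v) :
    run hn none (z ++ a :: v) = some (upRay a, (height (rayStep (upRay a)) v).toNat) := by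
  rw [run_append, hz, run_cons, letterPerm_none, run_of_staysNonneg (k := 0) (by simpa using hv)]
  simp

/-- Splitting at the last visit to the centre. -/
lemma run_ne_none_iff {w : List (Fin n × Bool)} :
    run hn none w ≠ none ↔
      ∃ z a v, w = z ++ a :: v ∧ run hn none z = none ∧ StaysNonneg (rayStep (upRay a)) 0 v := by
  refine ⟨fun hw => ?_, fun ⟨z, a, v, hw, hz, hv⟩ => by simp [hw, run_append_cons hz hv]⟩
  induction w using List.reverseRecOn with
  | nil => exact absurd rfl hw
  | append_singleton w x ih =>
    by_cases hw' : run hn none w = none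
    · exact ⟨w, x, [], by simp, hw', le_rfl⟩
    obtain ⟨z, a, v, rfl, hz, hv⟩ := ih hw'
    refine ⟨z, a, v ++ [x], by simp, hz, staysNonneg_append.mpr ⟨hv, ?_⟩⟩
    have hh := hv.add_height_nonneg
    rw [zero_add] at hh
    rw [run_append, run_append_cons hz hv, run_cons, run_nil, ne_eq, letterPerm_some_eq_none_iff,
      Int.toNat_of_nonneg hh, not_lt] at hw
    simpa [hh] using hw

lemma run_eq_none_iff {w : List (Fin n × Bool)} :
    run hn none w = none ↔ w = [] ∨ ∃ z a v d, w = z ++ a :: (v ++ [d]) ∧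
      run hn none z = none ∧ IsDyck (rayStep (upRay a)) v ∧ rayStep (upRay a) d = -1 := by
  constructor
  · intro hw
    rcases w.eq_nil_or_concat' with rfl | ⟨w, d, rfl⟩
    · exact .inl rfl
    have hw' : run hn none w ≠ none := fun h => by simp [run_append, h] at hw
    obtain ⟨z, a, v, rfl, hz, hv⟩ := run_ne_none_iff.mp hw'
    have hh := hv.add_height_nonneg
    rw [zero_add] at hh
    rw [run_append, run_append_cons hz hv, run_cons, run_nil, letterPerm_some_eq_none_iff,
      Int.toNat_of_nonneg hh] at hw
    have hd : rayStep (upRay a) d = -1 := by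
      rcases (rayStep (upRay a) d).trichotomy with hd | hd | hd
      · exact hd
      all_goals simp [hd] at hw; omega
    refine .inr ⟨z, a, v, d, by simp, hz, ⟨hv, ?_⟩, hd⟩
    simp only [hd, SignType.coe_neg_one] at hw
    omega
  · rintro (rfl | ⟨z, a, v, d, rfl, hz, hv, hd⟩)
    · rfl
    rw [← List.cons_append, ← List.append_assoc, run_append, run_append_cons hz hv.1, hv.2]
    simp [letterPerm_some, hd]

inductive StarNT (n : ℕ) : Type
  | start
  | center
  | dyck (l : Fin n)
  | nonneg (l : Fin n)
  deriving Fintype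

inductive StarRule : ContextFreeRule (Fin n × Bool) (StarNT n) → Prop
  | start (a) :
      StarRule ⟨.start, [nonterminal .center, terminal a, nonterminal (.nonneg (upRay a))]⟩
  | center_nil : StarRule ⟨.center, []⟩
  | center_return (a d) : rayStep (upRay a) d = -1 →
      StarRule ⟨.center,
        [nonterminal .center, terminal a, nonterminal (.dyck (upRay a)), terminal d]⟩
  | dyck_nil (l) : StarRule ⟨.dyck l, []⟩
  | dyck_flat (l x) : rayStep l x = 0 →
      StarRule ⟨.dyck l, [terminal x, nonterminal (.dyck l)]⟩
  | dyck_upDown (l u d) : rayStep l u = 1 → rayStep l d = -1 →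
      StarRule ⟨.dyck l, [terminal u, nonterminal (.dyck l), terminal d, nonterminal (.dyck l)]⟩
  | nonneg_nil (l) : StarRule ⟨.nonneg l, []⟩
  | nonneg_cons (l x) : 0 ≤ rayStep l x →
      StarRule ⟨.nonneg l, [terminal x, nonterminal (.nonneg l)]⟩
  | nonneg_upDown (l u d) : rayStep l u = 1 → rayStep l d = -1 →
      StarRule ⟨.nonneg l,
        [terminal u, nonterminal (.dyck l), terminal d, nonterminal (.nonneg l)]⟩

lemma setOf_starRule_finite (n : ℕ) :
    {r : ContextFreeRule (Fin n × Bool) (StarNT n) | StarRule r}.Finite := by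
  refine ((Set.finite_univ.prod (List.finite_length_le _ 4)).image
    fun p => (⟨p.1, p.2⟩ : ContextFreeRule _ _)).subset ?_
  rintro _ (_ | _ | _ | _ | _ | _ | _ | _ | _) <;> simp

/- An `abbrev`, so that `(starGrammar n).NT` and `StarNT n` are identified by `simp`. -/
noncomputable abbrev starGrammar (n : ℕ) : ContextFreeGrammar (Fin n × Bool) where
  NT := StarNT n
  initial := .start
  rules := (setOf_starRule_finite n).toFinset

lemma mem_starGrammar_rules {r : ContextFreeRule (Fin n × Bool) (StarNT n)} :
    r ∈ (starGrammar n).rules ↔ StarRule r :=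
  Set.Finite.mem_toFinset _

variable (hn) in
def StarNT.language : StarNT n → Language (Fin n × Bool)
  | .start => {w | run hn none w ≠ none}
  | .center => {w | run hn none w = none}
  | .dyck l => {w | IsDyck (rayStep l) w}
  | .nonneg l => {w | StaysNonneg (rayStep l) 0 w}

variable (hn) in
lemma StarRule.formLanguage_le {r : ContextFreeRule (Fin n × Bool) (StarNT n)}
    (hr : StarRule r) :
    formLanguage (StarNT.language hn) r.output ≤ StarNT.language hn r.input := by
  rcases hr with a | _ | ⟨a, d, hd⟩ | l | ⟨l, x, hx⟩ | ⟨l, u, d, hu, hd⟩ | l | ⟨l, x, hx⟩ |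
      ⟨l, u, d, hu, hd⟩ <;>
    intro w (hw : w ∈ formLanguage _ _) <;>
    simp only [mem_formLanguage_terminal_cons, mem_formLanguage_nonterminal_cons,
      mem_formLanguage_nil, StarNT.language, Set.mem_ofPred_eq, exists_eq_left, exists_eq_right',
      existsAndEq, List.append_nil, and_true, ne_eq] at hw ⊢
  · obtain ⟨z, hz, v, hv, rfl⟩ := hw
    exact run_ne_none_iff.mpr ⟨z, a, v, rfl, hz, hv⟩
  · simp [hw]
  · obtain ⟨z, hz, v, hv, rfl⟩ := hw
    exact run_eq_none_iff.mpr (.inr ⟨z, a, v, d, rfl, hz, hv, hd⟩)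
  · exact hw ▸ isDyck_nil
  · obtain ⟨v, hv, rfl⟩ := hw
    exact hv.cons hx
  · obtain ⟨w₁, w₂, ⟨h₁, h₂⟩, rfl⟩ := hw
    exact IsDyck.up_down hu hd h₁ h₂
  · simp [hw]
  · obtain ⟨v, hv, rfl⟩ := hw
    exact hv.cons hx
  · obtain ⟨w₁, w₂, ⟨h₁, h₂⟩, rfl⟩ := hw
    exact StaysNonneg.up_down hu hd h₁ h₂

lemma derives_dyck {l : Fin n} {w : List (Fin n × Bool)} (hw : IsDyck (rayStep l) w) :
    (starGrammar n).Derives [nonterminal (.dyck l)] (w.map terminal) :=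
  derives_of_isDyck (mem_starGrammar_rules.mpr (.dyck_nil l))
    (fun x hx => mem_starGrammar_rules.mpr (.dyck_flat l x hx))
    (fun u d hu hd => mem_starGrammar_rules.mpr (.dyck_upDown l u d hu hd)) hw

lemma derives_nonneg {l : Fin n} {w : List (Fin n × Bool)} (hw : StaysNonneg (rayStep l) 0 w) :
    (starGrammar n).Derives [nonterminal (.nonneg l)] (w.map terminal) :=
  derives_of_staysNonneg derives_dyck (mem_starGrammar_rules.mpr (.nonneg_nil l))
    (fun x hx => mem_starGrammar_rules.mpr (.nonneg_cons l x hx))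
    (fun u d hu hd => mem_starGrammar_rules.mpr (.nonneg_upDown l u d hu hd)) hw

lemma derives_center {w : List (Fin n × Bool)} (hw : run hn none w = none) :
    (starGrammar n).Derives [nonterminal .center] (w.map terminal) := by
  rcases run_eq_none_iff.mp hw with rfl | ⟨z, a, v, d, rfl, hz, hv, hd⟩
  · exact derives_of_mem_rules (mem_starGrammar_rules.mpr .center_nil) (.refl _)
  refine derives_of_mem_rules (mem_starGrammar_rules.mpr (.center_return a d hd)) ?_
  simpa using ((derives_center hz).append (Derives.refl [terminal a])).append
    ((derives_dyck hv).append (Derives.refl [terminal d]))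
termination_by w.length

variable (hn) in
theorem mem_starGrammar_language {w : List (Fin n × Bool)} :
    w ∈ (starGrammar n).language ↔ run hn none w ≠ none := by
  refine ⟨fun hw => language_le_of_rules _
    (fun r hr => (mem_starGrammar_rules.mp hr).formLanguage_le hn) hw, fun hw => ?_⟩
  obtain ⟨z, a, v, rfl, hz, hv⟩ := run_ne_none_iff.mp hw
  refine derives_of_mem_rules (mem_starGrammar_rules.mpr (.start a)) ?_
  simpa using ((derives_center hz).append (Derives.refl [terminal a])).append (derives_nonneg hv)

lemma evalWord_shift_apply (w : List (Fin n × Bool)) :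
    evalWord (fun i => shift hn i) w none = run hn none w.reverse := by
  rw [run, List.reverse_reverse]
  rfl

end StarShift

theorem language_moving_center_contextFree (n : ℕ) (hn : 3 ≤ n) :
    Language.IsContextFree
      {w : List (Fin n × Bool) |
        (evalWord (fun i : Fin n => shift (by omega : 2 ≤ n) i) w)
          (none : Option (Fin n × ℕ)) ≠ none} := by
  have hL : {w : List (Fin n × Bool) |
      evalWord (fun i => shift (by omega : 2 ≤ n) i) w none ≠ none} =
        (StarShift.starGrammar n).language.reverse := by
    ext w
    show _ ≠ none ↔ w.reverse ∈ (StarShift.starGrammar n).language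
    rw [StarShift.mem_starGrammar_language (by omega : 2 ≤ n), StarShift.evalWord_shift_apply]
  exact hL ▸ Language.IsContextFree.reverse ⟨_, rfl⟩
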